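/- Let (V, Ω) be a finite-dimensional symplectic vector space with subspaces C, E, K, L as above: C coisotropic, K = ker(Ω|_C), C = K ⊕ E (so Ω|_E is nondegenerate), E^⊥Ω = K ⊕ L with L Lagrangian. Then there is a linear symplectomorphism A : (V, Ω) → (E ⊕ K ⊕ K*, Ω|_E ⊕ Ω_can), where Ω_can is the canonical symplectic form on K ⊕ K* given by Ω_can((k₁,ξ₁),(k₂,ξ₂)) = ξ₂(k₁) − ξ₁(k₂), and A restricts to the identity on C = E ⊕ K. -/

import Mathlib

/-!
Since `K` is the radical of `Ω|_C` and `C = K ⊕ E`, the form `Ω|_E` is nondegenerate, so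
`V = E ⊕ E^⊥Ω = E ⊕ K ⊕ L`. Because `L` is isotropic and `Ω`-orthogonal to `E`, nondegeneracy of
`Ω` forces the pairing `L → K*`, `l ↦ Ω(·, l)|_K`, to be injective; it is surjective because every
functional on `K` extends to `V` and is represented by `Ω`, and `K` is orthogonal to all of
`C = E ⊕ K`. In the coordinates `V ≅ E × K × L` the only surviving terms of
`Ω(e + k + l, e' + k' + l')` are `Ω(e, e') + Ω(k, l') - Ω(k', l)`, which is the claimed form once
`l` is replaced by its image in `K*`.
-/

open LinearMap LinearMap.BilinForm

namespace LinearMap.BilinForm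

section CommRing

variable {R M : Type*} [CommRing R] [AddCommGroup M] [Module R M] {B : LinearMap.BilinForm R M}

theorem mem_orthogonal_iff_le_ker_flip {N : Submodule R M} {m : M} :
    m ∈ B.orthogonal N ↔ N ≤ ker (B.flip m) :=
  Iff.rfl

theorem orthogonal_sup (N N' : Submodule R M) :
    B.orthogonal (N ⊔ N') = B.orthogonal N ⊓ B.orthogonal N' := by
  ext m
  simp only [mem_orthogonal_iff_le_ker_flip, Submodule.mem_inf, sup_le_iff]

theorem le_orthogonal_comm (hB : B.IsRefl) {N N' : Submodule R M} (h : N ≤ B.orthogonal N') :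
    N' ≤ B.orthogonal N :=
  fun _ hn' _ hn ↦ hB _ _ (h hn _ hn')

theorem disjoint_orthogonal_of_sup_radical (hB : B.IsRefl) {C E K : Submodule R M}
    (hK : K = C ⊓ B.orthogonal C) (hCKE : K ⊔ E = C) (hKE : Disjoint K E) :
    Disjoint E (B.orthogonal E) := by
  rw [Submodule.disjoint_def]
  intro x hxE hxE'
  have hxC : x ∈ C := hCKE ▸ Submodule.mem_sup_right hxE
  have hxK' : x ∈ B.orthogonal K :=
    le_orthogonal_comm hB (hK ▸ inf_le_right : K ≤ B.orthogonal C) hxC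
  have hxK : x ∈ K := by
    rw [hK, ← hCKE, orthogonal_sup]
    exact ⟨hCKE ▸ hxC, hxK', hxE'⟩
  exact Submodule.disjoint_def.mp hKE x hxK hxE

theorem flip_domRestrict₁₂_injective (hB : B.Nondegenerate) {U K L : Submodule R M}
    (hL : L ≤ B.orthogonal U) (hUK : U ⊔ K = ⊤) :
    Function.Injective (B.domRestrict₁₂ K L).flip := by
  rw [← ker_eq_bot, Submodule.eq_bot_iff]
  intro l hl
  have hlK : (l : M) ∈ B.orthogonal K := fun k hk ↦ LinearMap.congr_fun hl ⟨k, hk⟩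
  have hl0 : (l : M) ∈ B.orthogonal ⊤ := by
    rw [← hUK, orthogonal_sup]
    exact ⟨hL l.2, hlK⟩
  rw [orthogonal_top_eq_bot hB] at hl0
  exact Subtype.ext hl0

theorem apply_add_add_eq_of_isAlt (hB : B.IsAlt) {E K L : Submodule R M}
    (hE : K ⊔ L ≤ B.orthogonal E) (hK : K ≤ B.orthogonal K) (hL : L ≤ B.orthogonal L)
    {e e' k k' l l' : M} (he : e ∈ E) (he' : e' ∈ E) (hk : k ∈ K) (hk' : k' ∈ K)
    (hl : l ∈ L) (hl' : l' ∈ L) :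
    B (e + (k + l)) (e' + (k' + l')) = B e e' + B k l' - B k' l := by
  have hKE := le_orthogonal_comm hB.isRefl (le_sup_left.trans hE)
  have hLE := le_orthogonal_comm hB.isRefl (le_sup_right.trans hE)
  have hlk' : B l k' = -B k' l := (hB.neg_eq k' l).symm
  simp only [map_add, LinearMap.add_apply, hE (Submodule.mem_sup_left hk') e he,
    hE (Submodule.mem_sup_right hl') e he, hKE he' k hk, hK hk' k hk, hLE he' l hl, hL hl' l hl,
    hlk']
  ring

end CommRing

section Field

variable {𝕜 V : Type*} [Field 𝕜] [AddCommGroup V] [Module 𝕜 V] [FiniteDimensional 𝕜 V]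
  {B : LinearMap.BilinForm 𝕜 V}

theorem flip_domRestrict₁₂_surjective (hB : B.Nondegenerate) {C K L : Submodule 𝕜 V}
    (hC : C ≤ B.orthogonal K) (hCL : C ⊔ L = ⊤) :
    Function.Surjective (B.domRestrict₁₂ K L).flip := by
  intro ξ
  obtain ⟨η, rfl⟩ := dualMap_surjective_of_injective K.injective_subtype ξ
  set v := (B.flip.toDual hB.flip).symm η
  have hv : ∀ w, B w v = η w := apply_toDual_symm_apply (B := B.flip) η
  obtain ⟨c, hc, l, hl, hcl⟩ := Submodule.mem_sup.mp (hCL ▸ Submodule.mem_top : v ∈ C ⊔ L)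
  refine ⟨⟨l, hl⟩, LinearMap.ext fun k ↦ ?_⟩
  change B k l = η k
  rw [← hv, ← hcl, map_add, hC hc k k.2, zero_add]

end Field

end LinearMap.BilinForm

namespace Submodule

variable {R M : Type*} [Ring R] [AddCommGroup M] [Module R M] {E K L : Submodule R M}

noncomputable def prodProdEquivOfIsCompl (hE : IsCompl E (K ⊔ L)) (hKL : Disjoint K L) :
    (E × K × L) ≃ₗ[R] M :=
  LinearEquiv.ofBijective (E.subtype.coprod (K.subtype.coprod L.subtype)) <| by
    constructor
    · rw [← ker_eq_bot, ker_coprod_of_disjoint_range, ker_coprod_of_disjoint_range]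
      · simp only [ker_subtype, prod_bot]
      · simpa only [range_subtype] using hKL
      · simpa only [range_coprod, range_subtype] using hE.disjoint
    · rw [← range_eq_top, range_coprod, range_coprod, range_subtype, range_subtype, range_subtype,
        hE.sup_eq_top]

@[simp]
theorem prodProdEquivOfIsCompl_apply (hE : IsCompl E (K ⊔ L)) (hKL : Disjoint K L)
    (x : E × K × L) : prodProdEquivOfIsCompl hE hKL x = x.1 + (x.2.1 + x.2.2) :=
  rfl

end Submodule

theorem pmct_stmt3_general
    (V : Type*) [AddCommGroup V] [Module ℝ V] [FiniteDimensional ℝ V]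
    (Ω : LinearMap.BilinForm ℝ V) (halt : Ω.IsAlt) (hnd : Ω.Nondegenerate)
    (C E K L : Submodule ℝ V)
    -- `K` is the kernel of the restriction of `Ω` to `C`:
    (hK : K = C ⊓ Ω.orthogonal C)
    -- `C = K ⊕ E`:
    (hCKE : K ⊔ E = C) (hKE : K ⊓ E = ⊥)
    -- `L` is Lagrangian:
    (hLag : Ω.orthogonal L = L)
    -- `E^⊥Ω = K ⊕ L`:
    (hEperp : Ω.orthogonal E = K ⊔ L) (hKL : K ⊓ L = ⊥) :
    ∃ A : V ≃ₗ[ℝ] E × K × Module.Dual ℝ K,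
      -- `A` is a symplectomorphism onto `(E ⊕ K ⊕ K*, Ω|_E ⊕ Ω_can)`:
      (∀ v w : V,
        Ω v w = Ω ((A v).1 : V) ((A w).1 : V)
          + (A w).2.2 (A v).2.1 - (A v).2.2 (A w).2.1) ∧
      -- `A` restricts to the identity on `C = E ⊕ K`:
      (∀ e : E, A (e : V) = (e, 0, 0)) ∧
      (∀ k : K, A (k : V) = (0, k, 0)) := by
  have hKC : K ≤ Ω.orthogonal C := hK ▸ inf_le_right
  have hEKL : IsCompl E (K ⊔ L) := hEperp ▸ (isCompl_orthogonal_iff_disjoint halt.isRefl).mpr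
    (disjoint_orthogonal_of_sup_radical halt.isRefl hK hCKE (disjoint_iff.mpr hKE))
  let D := Submodule.prodProdEquivOfIsCompl hEKL (disjoint_iff.mpr hKL)
  have hI : Function.Bijective (Ω.domRestrict₁₂ K L).flip := by
    refine ⟨flip_domRestrict₁₂_injective hnd (U := E ⊔ L) ?_ ?_,
      flip_domRestrict₁₂_surjective hnd (le_orthogonal_comm halt.isRefl hKC) ?_⟩
    · rw [orthogonal_sup, hEperp, hLag]
      exact le_inf le_sup_right le_rfl
    · rw [sup_right_comm, sup_assoc, hEKL.sup_eq_top]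
    · rw [← hCKE, sup_comm K, sup_assoc, hEKL.sup_eq_top]
  let A := D.symm ≪≫ₗ (LinearEquiv.refl ℝ E).prodCongr
    ((LinearEquiv.refl ℝ K).prodCongr (LinearEquiv.ofBijective _ hI))
  have hA : ∀ x, A (D x) = (x.1, x.2.1, (Ω.domRestrict₁₂ K L).flip x.2.2) := by
    intro x; simp [A]
  refine ⟨A, fun v w ↦ ?_, fun e ↦ ?_, fun k ↦ ?_⟩
  · obtain ⟨⟨e, k, l⟩, rfl⟩ := D.surjective v
    obtain ⟨⟨e', k', l'⟩, rfl⟩ := D.surjective w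
    rw [hA, hA]
    exact apply_add_add_eq_of_isAlt halt hEperp.ge (hKC.trans (orthogonal_le (hK ▸ inf_le_left)))
      hLag.ge e.2 e'.2 k.2 k'.2 l.2 l'.2
  · simpa [D] using hA (e, 0, 0)
  · simpa [D] using hA (0, k, 0)

theorem pmct_stmt3
    (V : Type*) [AddCommGroup V] [Module ℝ V] [FiniteDimensional ℝ V]
    (Ω : LinearMap.BilinForm ℝ V) (halt : Ω.IsAlt) (hnd : Ω.Nondegenerate)
    (C E K L : Submodule ℝ V)
    -- `C` is coisotropic:
    (hco : Ω.orthogonal C ≤ C)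
    -- `K` is the kernel of the restriction of `Ω` to `C`:
    (hK : K = C ⊓ Ω.orthogonal C)
    -- `C = K ⊕ E`:
    (hCKE : K ⊔ E = C) (hKE : K ⊓ E = ⊥)
    -- `L` is Lagrangian:
    (hLag : Ω.orthogonal L = L)
    -- `E^⊥Ω = K ⊕ L`:
    (hEperp : Ω.orthogonal E = K ⊔ L) (hKL : K ⊓ L = ⊥) :
    ∃ A : V ≃ₗ[ℝ] E × K × Module.Dual ℝ K,
      -- `A` is a symplectomorphism onto `(E ⊕ K ⊕ K*, Ω|_E ⊕ Ω_can)`: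
      (∀ v w : V,
        Ω v w = Ω ((A v).1 : V) ((A w).1 : V)
          + (A w).2.2 (A v).2.1 - (A v).2.2 (A w).2.1) ∧
      -- `A` restricts to the identity on `C = E ⊕ K`:
      (∀ e : E, A (e : V) = (e, 0, 0)) ∧
      (∀ k : K, A (k : V) = (0, k, 0)) :=
  pmct_stmt3_general V Ω halt hnd C E K L hK hCKE hKE hLag hEperp hKL
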